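/- Generalization performance lower bound: for any policy π, ζ(π) ≥ η(π) − (2·r_max/(1−γ))·(1 − M₀), where ζ is the expected discounted return averaged over m ∼ p_M, η is the same averaged over the truncated distribution p_{M_train}, all rewards are bounded by r_max, and M₀ = P_{m∼p_M}(m ∈ M_train). -/
import Mathlib


open MeasureTheory

/-- Generalization performance lower bound (Theorem 1):
`ζ(π) ≥ η(π) - (2 r_max / (1 - γ)) * (1 - M₀)`. -/
theorem generalization_performance_lower_bound
    {M : Type*} [MeasurableSpace M] (μ : Measure M) (pM : M → ℝ)
    (hp_meas : Measurable pM) (hp_nonneg : ∀ m, 0 ≤ pM m)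
    (hp_int : Integrable pM μ) (hp_one : ∫ m, pM m ∂μ = 1)
    (Mtrain : Set M) (hS : MeasurableSet Mtrain)
    (M₀ : ℝ) (hM₀ : M₀ = ∫ m in Mtrain, pM m ∂μ)
    (hM₀_pos : 0 < M₀) (hM₀_le : M₀ ≤ 1)
    (pTrain : M → ℝ)
    (hpTrain : ∀ m, pTrain m = pM m * Mtrain.indicator (fun _ => (1 : ℝ)) m / M₀)
    -- expected discounted return of the policy in each MDP m
    (g : M → ℝ) (hg_meas : Measurable g)
    (rmax γ : ℝ) (hrmax : 0 ≤ rmax) (hγ0 : 0 < γ) (hγ1 : γ < 1)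
    (hg_bdd : ∀ m, |g m| ≤ rmax / (1 - γ))
    (hgp_int : Integrable (fun m => g m * pM m) μ)
    (hgq_int : Integrable (fun m => g m * pTrain m) μ)
    (ζ η : ℝ)
    (hζ : ζ = ∫ m, g m * pM m ∂μ)
    (hη : η = ∫ m, g m * pTrain m ∂μ) :
    ζ ≥ η - 2 * rmax / (1 - γ) * (1 - M₀) := by
  have h1γ : (0:ℝ) < 1 - γ := by linarith
  set B := rmax / (1 - γ) with hB
  have hBpos : 0 ≤ B := div_nonneg hrmax h1γ.le
  set I := ∫ m in Mtrain, g m * pM m ∂μ with hI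
  set J := ∫ m in Mtrainᶜ, g m * pM m ∂μ with hJ
  have hζIJ : ζ = I + J := by
    rw [hζ, ← integral_add_compl hS hgp_int]
  have hηI : η = I / M₀ := by
    rw [hη]
    have heq : (fun m => g m * pTrain m)
        = fun m => Mtrain.indicator (fun m => g m * pM m / M₀) m := by
      funext m
      rw [hpTrain m]
      by_cases hm : m ∈ Mtrain <;>
        simp [Set.indicator_of_mem, Set.indicator_of_notMem, hm] <;> ring
    rw [heq, integral_indicator hS, integral_div]
  have hMc : ∫ m in Mtrainᶜ, pM m ∂μ = 1 - M₀ := by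
    have h := integral_add_compl hS hp_int (f := pM)
    rw [hp_one] at h
    rw [hM₀]; linarith
  have hptw : ∀ m, |g m * pM m| ≤ B * pM m := by
    intro m
    rw [abs_mul, abs_of_nonneg (hp_nonneg m)]
    exact mul_le_mul_of_nonneg_right (hg_bdd m) (hp_nonneg m)
  have habs : ∀ s : Set M, |∫ m in s, g m * pM m ∂μ| ≤ B * ∫ m in s, pM m ∂μ := by
    intro s
    calc |∫ m in s, g m * pM m ∂μ| ≤ ∫ m in s, |g m * pM m| ∂μ := by
          simpa [Real.norm_eq_abs, abs_mul] using
            norm_integral_le_integral_norm (μ := μ.restrict s) (fun m => g m * pM m)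
      _ ≤ ∫ m in s, B * pM m ∂μ := by
          apply integral_mono (hgp_int.restrict.abs) ((hp_int.restrict).const_mul B)
          intro m; exact hptw m
      _ = B * ∫ m in s, pM m ∂μ := integral_const_mul B _
  have hIb : |I| ≤ B * M₀ := by
    have := habs Mtrain; rw [← hM₀] at this; exact this
  have hJb : |J| ≤ B * (1 - M₀) := by
    have := habs Mtrainᶜ; rw [hMc] at this; exact this
  have hIle := (abs_le.mp hIb).2
  have hIge := (abs_le.mp hIb).1
  have hJge := (abs_le.mp hJb).1
  have hηle : η ≤ B := by
    rw [hηI]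
    rw [div_le_iff₀ hM₀_pos]
    linarith
  have hIη : I = η * M₀ := by
    rw [hηI]; field_simp
  have h2B : 2 * rmax / (1 - γ) = 2 * B := by
    rw [hB]; ring
  rw [hζIJ, h2B, hIη]
  nlinarith [mul_nonneg (sub_nonneg.mpr hηle) (sub_nonneg.mpr hM₀_le)]
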